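/- For every integer r ≥ 4 there exist a constant c > 0 and an integer n₀ such that for all n ≥ n₀ there is a simple graph G on n vertices together with a proper edge-coloring of G containing no rainbow copy of the complete graph K_r, such that G contains at least c·n^{r−2} copies of K_r. (Claim from the concluding remarks: ex(n, K_r, rainbow-K_r) = Ω(n^{r−2}).) -/

import Mathlib

open SimpleGraph

/-- A proper edge-coloring: distinct edges of `G` sharing a vertex get different colors. -/
def IsProperEdgeColoring {V β : Type*} (G : SimpleGraph V) (c : Sym2 V → β) : Prop :=
  ∀ e₁ ∈ G.edgeSet, ∀ e₂ ∈ G.edgeSet, e₁ ≠ e₂ → (∃ v, v ∈ e₁ ∧ v ∈ e₂) → c e₁ ≠ c e₂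

/-- `G`, with edge-coloring `c`, contains a rainbow copy of `H`:
a subgraph isomorphic to `H` all of whose edges get pairwise distinct colors. -/
def HasRainbowCopy {V W β : Type*} (G : SimpleGraph V) (c : Sym2 V → β)
    (H : SimpleGraph W) : Prop :=
  ∃ A : G.Subgraph, Nonempty (A.coe ≃g H) ∧ Set.InjOn c A.edgeSet

/-- The number of copies of `H` in `G`, i.e. the number of subgraphs of `G`
isomorphic to `H`. -/
noncomputable def copyCount {V W : Type*} (G : SimpleGraph V) (H : SimpleGraph W) : ℕ :=
  Set.ncard {A : G.Subgraph | Nonempty (A.coe ≃g H)}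

/-!
Split the vertices into `r` parts `0, …, r-1` and into blocks of size `r`, and glue the parts
into `r - 2` cells `{0,1}, {2,3}, {4}, …, {r-1}`. Join two vertices when they lie in different
parts, except that two vertices of the same cell must also lie in the same block. Every `K_r`
takes one vertex from each part, so it contains an edge between parts `0` and `1` and one between
parts `2` and `3`, and these edges stay inside a block. Such edges form a matching, so they can
all receive one colour while every other edge gets its own: the colouring is proper and has no
rainbow `K_r`. A `K_r` is determined by choosing a block for each cell, which gives
`(n / r) ^ (r - 2)` copies.
-/

open Function

section Coloring

variable {V : Type*}

open Classical in
noncomputable def matchingColoring (H : SimpleGraph V) (code : Sym2 V → ℕ) (e : Sym2 V) : ℕ :=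
  if e ∈ H.edgeSet then 0 else code e + 1

lemma matchingColoring_of_mem {H : SimpleGraph V} (code : Sym2 V → ℕ) {e : Sym2 V}
    (he : e ∈ H.edgeSet) : matchingColoring H code e = 0 := by
  simp [matchingColoring, he]

lemma eq_of_mem_edgeSet_of_subsingleton_neighbors {H : SimpleGraph V}
    (hH : ∀ v a b, H.Adj v a → H.Adj v b → a = b) {e₁ e₂ : Sym2 V}
    (h₁ : e₁ ∈ H.edgeSet) (h₂ : e₂ ∈ H.edgeSet) {v : V} (hv₁ : v ∈ e₁) (hv₂ : v ∈ e₂) :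
    e₁ = e₂ := by
  obtain ⟨a, rfl⟩ := Sym2.mem_iff_exists.mp hv₁
  obtain ⟨b, rfl⟩ := Sym2.mem_iff_exists.mp hv₂
  rw [hH v a b h₁ h₂]

theorem isProperEdgeColoring_matchingColoring (G H : SimpleGraph V)
    (hH : ∀ v a b, H.Adj v a → H.Adj v b → a = b) {code : Sym2 V → ℕ} (hcode : Injective code) :
    IsProperEdgeColoring G (matchingColoring H code) := by
  intro e₁ _ e₂ _ hne ⟨v, hv₁, hv₂⟩
  unfold matchingColoring
  split_ifs with h₁ h₂ h₂
  · exact absurd (eq_of_mem_edgeSet_of_subsingleton_neighbors hH h₁ h₂ hv₁ hv₂) hne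
  · omega
  · omega
  · exact fun h => hne (hcode (by omega))

end Coloring

section Copies

variable {V α β : Type*} {G : SimpleGraph V}

lemma Subgraph.adj_of_iso_top {A : G.Subgraph} (φ : A.coe ≃g (⊤ : SimpleGraph α))
    {x y : A.verts} (h : x ≠ y) : A.Adj x y :=
  φ.map_adj_iff.mp (φ.injective.ne h)

lemma Subgraph.surjective_coloring_of_iso_top [Finite α] (C : G.Coloring α) {A : G.Subgraph}
    (φ : A.coe ≃g (⊤ : SimpleGraph α)) : Surjective fun x : A.verts => C x := by
  have hinj : Injective fun x : A.verts => C x := fun x y hxy => by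
    by_contra hne
    exact C.valid (A.adj_sub (adj_of_iso_top φ hne)) hxy
  exact (Finite.injective_iff_surjective.mp (hinj.comp φ.symm.injective)).of_comp

/-- A copy of `K_α` meets every colour class of `C`. -/
theorem not_hasRainbowCopy_top_of_coloring [Finite α] (C : G.Coloring α) {col : Sym2 V → β}
    {i j k l : α} (hij : i ≠ j) (hkl : k ≠ l) (hik : i ≠ k) (hil : i ≠ l)
    (hcol : ∀ a b c d, G.Adj a b → G.Adj c d → C a = i → C b = j → C c = k → C d = l →
      col s(a, b) = col s(c, d)) :
    ¬HasRainbowCopy G col (⊤ : SimpleGraph α) := by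
  rintro ⟨A, ⟨φ⟩, hrainbow⟩
  have hsurj := Subgraph.surjective_coloring_of_iso_top C φ
  obtain ⟨a, ha⟩ := hsurj i
  obtain ⟨b, hb⟩ := hsurj j
  obtain ⟨c, hc⟩ := hsurj k
  obtain ⟨d, hd⟩ := hsurj l
  have hab : A.Adj a b := Subgraph.adj_of_iso_top φ (by rintro rfl; exact hij (ha ▸ hb))
  have hcd : A.Adj c d := Subgraph.adj_of_iso_top φ (by rintro rfl; exact hkl (hc ▸ hd))
  have hedge := hrainbow hab hcd (hcol _ _ _ _ (A.adj_sub hab) (A.adj_sub hcd) ha hb hc hd)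
  rcases Sym2.eq_iff.mp hedge with ⟨h, -⟩ | ⟨h, -⟩
  · exact hik (by rw [← ha, ← hc]; simp only [h])
  · exact hil (by rw [← ha, ← hd]; simp only [h])

theorem card_le_copyCount [Finite V] {ι W : Type*} [Fintype ι] {H : SimpleGraph W}
    (f : ι → Copy H G) (hf : Injective fun i => Set.range (f i)) :
    Fintype.card ι ≤ _root_.copyCount G H := by
  have hsub : Set.range (fun i => (f i).toSubgraph) ⊆
      {A : G.Subgraph | Nonempty (A.coe ≃g H)} := by
    rintro _ ⟨i, rfl⟩
    exact ⟨(f i).isoToSubgraph.symm⟩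
  have hinj : Injective fun i => (f i).toSubgraph := fun i i' h =>
    hf (by simpa using congrArg Subgraph.verts h)
  calc Fintype.card ι = (Set.range fun i => (f i).toSubgraph).ncard := by
        rw [Set.ncard_range_of_injective hinj, Nat.card_eq_fintype_card]
    _ ≤ _ := Set.ncard_le_ncard hsub (Set.toFinite _)

end Copies

namespace Nat

lemma mul_add_lt_of_lt_div {n r b i : ℕ} (hb : b < n / r) (hi : i < r) : r * b + i < n :=
  calc r * b + i < r * (b + 1) := by rw [Nat.mul_succ]; omega
    _ ≤ r * (n / r) := Nat.mul_le_mul_left r hb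
    _ ≤ n := Nat.mul_div_le n r

lemma div_two_mul_le_cast_div {n r : ℕ} (hr : 0 < r) (hrn : r ≤ n) :
    (n : ℝ) / (2 * r) ≤ (n / r : ℕ) := by
  have hq : r ≤ r * (n / r) := Nat.le_mul_of_pos_right r (Nat.div_pos hrn hr)
  have hn : n ≤ 2 * (r * (n / r)) := by
    have := Nat.div_add_mod n r
    have := Nat.mod_lt n hr
    omega
  have hnR : (n : ℝ) ≤ 2 * (r * (n / r : ℕ)) := by exact_mod_cast hn
  rw [div_le_iff₀ (by positivity)]
  linarith

end Nat

namespace RainbowCliqueFree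

def cell (i : ℕ) : ℕ := if i < 4 then i / 2 else i - 2

lemma eq_of_cell_eq {i j k : ℕ} (hij : i ≠ j) (hik : i ≠ k) (hj : cell i = cell j)
    (hk : cell i = cell k) : j = k := by
  unfold cell at hj hk
  split_ifs at hj hk <;> omega

variable {n r : ℕ}

/-- Vertex `v` lies in part `v % r` and block `v / r`. -/
def graph (n r : ℕ) : SimpleGraph (Fin n) where
  Adj a b := (a : ℕ) % r ≠ b % r ∧ (cell (a % r) = cell (b % r) → (a : ℕ) / r = b / r)
  symm := ⟨fun _ _ h => ⟨h.1.symm, fun hc => (h.2 hc.symm).symm⟩⟩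
  loopless := ⟨fun _ h => h.1 rfl⟩

def twinGraph (n r : ℕ) : SimpleGraph (Fin n) where
  Adj a b := a ≠ b ∧ cell (a % r) = cell (b % r) ∧ (a : ℕ) / r = b / r
  symm := ⟨fun _ _ h => ⟨h.1.symm, h.2.1.symm, h.2.2.symm⟩⟩
  loopless := ⟨fun _ h => h.1 rfl⟩

lemma twinGraph_adj_unique (v a b : Fin n) (ha : (twinGraph n r).Adj v a)
    (hb : (twinGraph n r).Adj v b) : a = b := by
  obtain ⟨hva, hca, hda⟩ := ha
  obtain ⟨hvb, hcb, hdb⟩ := hb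
  refine Fin.ext (Nat.ext_div_mod (hda.symm.trans hdb) (eq_of_cell_eq ?_ ?_ hca hcb))
  · exact fun h => hva (Fin.ext (Nat.ext_div_mod hda h))
  · exact fun h => hvb (Fin.ext (Nat.ext_div_mod hdb h))

lemma twinGraph_adj_of_adj {a b : Fin n} (h : (graph n r).Adj a b)
    (hcell : cell (a % r) = cell (b % r)) : (twinGraph n r).Adj a b :=
  ⟨(graph n r).ne_of_adj h, hcell, h.2 hcell⟩

def partColoring (hr : 0 < r) : (graph n r).Coloring (Fin r) :=
  Coloring.mk (fun v => ⟨v % r, Nat.mod_lt _ hr⟩) fun h heq => h.1 (congrArg Fin.val heq)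

theorem not_hasRainbowCopy (hr : 4 ≤ r) (code : Sym2 (Fin n) → ℕ) :
    ¬HasRainbowCopy (graph n r) (matchingColoring (twinGraph n r) code)
      (⊤ : SimpleGraph (Fin r)) := by
  refine not_hasRainbowCopy_top_of_coloring (partColoring (by omega))
    (i := ⟨0, by omega⟩) (j := ⟨1, by omega⟩) (k := ⟨2, by omega⟩) (l := ⟨3, by omega⟩)
    (by simp) (by simp) (by simp) (by simp) ?_
  intro a b c d hab hcd ha hb hc hd
  simp only [partColoring, Coloring.mk, RelHom.coeFn_mk, Fin.mk.injEq] at ha hb hc hd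
  rw [matchingColoring_of_mem code (twinGraph_adj_of_adj hab (by simp [ha, hb, cell])),
    matchingColoring_of_mem code (twinGraph_adj_of_adj hcd (by simp [hc, hd, cell]))]

def cellIndex (hr : 4 ≤ r) (i : Fin r) : Fin (r - 2) :=
  ⟨cell i, by unfold cell; split_ifs <;> omega⟩

lemma cellIndex_surjective (hr : 4 ≤ r) : Surjective (cellIndex hr) := fun j =>
  ⟨⟨if (j : ℕ) < 2 then 2 * j else j + 2, by split_ifs <;> omega⟩,
    Fin.ext (by simp only [cellIndex, cell]; split_ifs <;> omega)⟩

def cliqueVertex (hr : 4 ≤ r) (t : Fin (r - 2) → Fin (n / r)) (i : Fin r) : Fin n :=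
  ⟨r * t (cellIndex hr i) + i, Nat.mul_add_lt_of_lt_div (t _).isLt i.isLt⟩

lemma cliqueVertex_mod (hr : 4 ≤ r) (t : Fin (r - 2) → Fin (n / r)) (i : Fin r) :
    (cliqueVertex hr t i : ℕ) % r = i := by
  simp [cliqueVertex, Nat.mod_eq_of_lt i.isLt]

lemma cliqueVertex_div (hr : 4 ≤ r) (t : Fin (r - 2) → Fin (n / r)) (i : Fin r) :
    (cliqueVertex hr t i : ℕ) / r = t (cellIndex hr i) := by
  simp [cliqueVertex, Nat.mul_add_div (show 0 < r by omega), Nat.div_eq_of_lt i.isLt]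

lemma cliqueVertex_injective (hr : 4 ≤ r) (t : Fin (r - 2) → Fin (n / r)) :
    Injective (cliqueVertex hr t) := fun i j h =>
  Fin.ext (by rw [← cliqueVertex_mod hr t i, ← cliqueVertex_mod hr t j, h])

lemma graph_adj_cliqueVertex (hr : 4 ≤ r) (t : Fin (r - 2) → Fin (n / r))
    {i j : Fin r} (hij : i ≠ j) :
    (graph n r).Adj (cliqueVertex hr t i) (cliqueVertex hr t j) := by
  refine ⟨?_, fun hcell => ?_⟩
  · rw [cliqueVertex_mod, cliqueVertex_mod]
    exact Fin.val_injective.ne hij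
  · rw [cliqueVertex_div, cliqueVertex_div, show cellIndex hr i = cellIndex hr j from
      Fin.ext (by rwa [cliqueVertex_mod, cliqueVertex_mod] at hcell)]

def cliqueCopy (hr : 4 ≤ r) (t : Fin (r - 2) → Fin (n / r)) :
    Copy (⊤ : SimpleGraph (Fin r)) (graph n r) :=
  Hom.toCopy ⟨cliqueVertex hr t, graph_adj_cliqueVertex hr t⟩ (cliqueVertex_injective hr t)

lemma range_cliqueVertex_injective (hr : 4 ≤ r) :
    Injective fun t : Fin (r - 2) → Fin (n / r) => Set.range (cliqueVertex hr t) := by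
  intro t t' h
  have hvert : cliqueVertex hr t = cliqueVertex hr t' := funext fun i => by
    have hrange : Set.range (cliqueVertex hr t) = Set.range (cliqueVertex hr t') := h
    obtain ⟨j, hj⟩ := hrange ▸ Set.mem_range_self (f := cliqueVertex hr t) i
    obtain rfl : j = i := Fin.ext (by rw [← cliqueVertex_mod hr t' j, hj, cliqueVertex_mod])
    exact hj.symm
  refine (cellIndex_surjective hr).injective_comp_right (funext fun i => Fin.ext ?_)
  simpa only [comp_apply, cliqueVertex_div] using congrArg (fun v => (v i : ℕ) / r) hvert

theorem pow_le_copyCount (n : ℕ) (hr : 4 ≤ r) :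
    (n / r) ^ (r - 2) ≤ _root_.copyCount (graph n r) (⊤ : SimpleGraph (Fin r)) := by
  simpa using card_le_copyCount (cliqueCopy hr) (range_cliqueVertex_injective hr)

end RainbowCliqueFree

open RainbowCliqueFree in
/-- Claim from the concluding remarks: ex(n, K_r, rainbow-K_r) = Ω(n^{r-2}). -/
theorem clique_rainbow_lower (r : ℕ) (hr : 4 ≤ r) :
    ∃ c : ℝ, 0 < c ∧ ∃ n₀ : ℕ, ∀ n ≥ n₀,
      ∃ (G : SimpleGraph (Fin n)) (col : Sym2 (Fin n) → ℕ),
        IsProperEdgeColoring G col ∧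
        ¬ HasRainbowCopy G col (⊤ : SimpleGraph (Fin r)) ∧
        c * (n : ℝ) ^ (r - 2) ≤ (_root_.copyCount G (⊤ : SimpleGraph (Fin r)) : ℝ) := by
  have hrR : (0 : ℝ) < r := by exact_mod_cast (by omega : 0 < r)
  refine ⟨1 / (2 * r : ℝ) ^ (r - 2), by positivity, r, fun n hn => ?_⟩
  obtain ⟨code, hcode⟩ := Countable.exists_injective_nat (Sym2 (Fin n))
  refine ⟨graph n r, matchingColoring (twinGraph n r) code,
    isProperEdgeColoring_matchingColoring _ _ twinGraph_adj_unique hcode,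
    not_hasRainbowCopy hr code, ?_⟩
  calc 1 / (2 * r : ℝ) ^ (r - 2) * n ^ (r - 2) = ((n : ℝ) / (2 * r)) ^ (r - 2) := by
        rw [div_pow]; ring
    _ ≤ ((n / r : ℕ) : ℝ) ^ (r - 2) :=
        pow_le_pow_left₀ (by positivity) (Nat.div_two_mul_le_cast_div (by omega) hn) _
    _ ≤ _ := by exact_mod_cast pow_le_copyCount n hr
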